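/- Let M be a matroid on the finite ground set V with rank r ≥ 1. Let f : (k+1)^V → ℝ be monotone and orthant submodular with f(0) ≥ 0, let ε ≥ 0, and let f̂ : (k+1)^V → ℝ satisfy |f(x) − f̂(x)| ≤ ε for all x. Let s^{(0)} = 0, and for j = 1, …, r let s^{(j)} = s^{(j−1)}[e_j ↦ i_j], where supp(s^{(j−1)}) ∪ {e_j} is independent in M with e_j ∉ supp(s^{(j−1)}), and Δ_{e_j,i_j} f̂(s^{(j−1)}) ≥ Δ_{e,i} f̂(s^{(j−1)}) for every e ∉ supp(s^{(j−1)}) with supp(s^{(j−1)}) ∪ {e} independent and every i ∈ {1,…,k}. Then for every o ∈ (k+1)^V whose support supp(o) is a basis of M, the output s = s^{(r)} satisfies f(s) ≥ (1/2)·f(o) − (r+1)·ε. -/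

import Mathlib

namespace Stmt10

variable {V : Type*}

/-- A matroid on `V`, given by its collection of independent (finite) subsets. -/
structure FinMatroid (V : Type*) [DecidableEq V] where
  Indep : Finset V → Prop
  indep_empty : Indep ∅
  indep_subset : ∀ ⦃A B : Finset V⦄, A ⊆ B → Indep B → Indep A
  indep_exchange : ∀ ⦃A B : Finset V⦄, Indep A → Indep B → A.card < B.card →
    ∃ x ∈ B \ A, Indep (insert x A)

/-- A basis is a maximal independent set. -/
def FinMatroid.IsBasis [DecidableEq V] (M : FinMatroid V) (B : Finset V) : Prop :=
  M.Indep B ∧ ∀ ⦃A : Finset V⦄, M.Indep A → B ⊆ A → A = B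

/-- Marginal gain `Δ_{e,i} f(x) = f(x[e↦i]) − f(x)`. -/
def marg {k : ℕ} [DecidableEq V] (f : (V → Fin (k+1)) → ℝ)
    (x : V → Fin (k+1)) (e : V) (i : Fin (k+1)) : ℝ :=
  f (Function.update x e i) - f x

/-- `x ⪯ y` : `y` agrees with `x` on the support of `x`. -/
def preceq {k : ℕ} (x y : V → Fin (k+1)) : Prop :=
  ∀ e, x e ≠ 0 → y e = x e

def MonotoneK {k : ℕ} [DecidableEq V] (f : (V → Fin (k+1)) → ℝ) : Prop :=
  ∀ x : V → Fin (k+1), ∀ e, x e = 0 → ∀ i : Fin (k+1), i ≠ 0 →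
    0 ≤ marg f x e i

def OrthantSubmodular {k : ℕ} [DecidableEq V] (f : (V → Fin (k+1)) → ℝ) : Prop :=
  ∀ x y : V → Fin (k+1), preceq x y → ∀ e, y e = 0 → ∀ i : Fin (k+1), i ≠ 0 →
    marg f x e i ≥ marg f y e i

/-- The support of `x` as a finset. -/
def suppF {k : ℕ} [Fintype V] [DecidableEq V] (x : V → Fin (k+1)) : Finset V :=
  Finset.univ.filter (fun v => x v ≠ 0)

/-!
Along the greedy run keep a vector `o'` with `s j ⪯ o'` whose support is a basis,
starting from `o`. At each step basis exchange yields `y` with `supp o' - y + e_j` a basis; clear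
`y` in `o'` and set `e_j ↦ i_j`. By orthant submodularity and monotonicity this costs at most the
gain of `(y, o' y)` at `s j`, which by greedy choice is at most the `f̂`-gain of the step plus
`2ε`. After `r` steps `o' = s r`; telescoping gives `f o - f s ≤ f̂ s - f̂ 0 + 2 r ε`.
-/

namespace FinMatroid

variable [DecidableEq V] {M : FinMatroid V} {A B S : Finset V}

lemma augment (hA : M.Indep A) (hB : M.Indep B) (hAB : A.card ≤ B.card) :
    ∃ I, A ⊆ I ∧ I ⊆ A ∪ B ∧ M.Indep I ∧ I.card = B.card := by
  obtain ⟨n, hn⟩ : ∃ n, B.card - A.card = n := ⟨_, rfl⟩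
  induction n generalizing A with
  | zero => exact ⟨A, subset_rfl, Finset.subset_union_left, hA, by omega⟩
  | succ n ih =>
    obtain ⟨x, hx, hxA⟩ := M.indep_exchange hA hB (by omega)
    rw [Finset.mem_sdiff] at hx
    have hcard := Finset.card_insert_of_notMem hx.2
    obtain ⟨I, hxI, hIsub, hI, hIcard⟩ := ih hxA (by omega) (by omega)
    refine ⟨I, (Finset.subset_insert _ _).trans hxI, hIsub.trans ?_, hI, hIcard⟩
    rw [Finset.insert_union]
    exact Finset.insert_subset (Finset.mem_union_right _ hx.1) subset_rfl

lemma card_le_card_of_isBasis (hB : M.IsBasis B) (hA : M.Indep A) : A.card ≤ B.card := by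
  by_contra! h
  obtain ⟨x, hx, hxB⟩ := M.indep_exchange hB.1 hA h
  have hxB' : insert x B = B := hB.2 hxB (Finset.subset_insert _ _)
  exact (Finset.mem_sdiff.1 hx).2 (hxB' ▸ Finset.mem_insert_self x B)

lemma isBasis_of_card_le (hB : M.IsBasis B) (hA : M.Indep A) (h : B.card ≤ A.card) :
    M.IsBasis A :=
  ⟨hA, fun _ hC hAC =>
    (Finset.eq_of_subset_of_card_le hAC ((card_le_card_of_isBasis hB hC).trans h)).symm⟩

lemma exists_isBasis_insert_erase {e : V} (hB : M.IsBasis B) (hSB : S ⊆ B) (he : e ∉ S)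
    (hSe : M.Indep (insert e S)) :
    ∃ y ∈ B, y ∉ S ∧ (e ∈ B → y = e) ∧ M.IsBasis (insert e (B.erase y)) := by
  by_cases heB : e ∈ B
  · exact ⟨e, heB, he, fun _ => rfl, by rwa [Finset.insert_erase heB]⟩
  obtain ⟨I, hSeI, hIsub, hI, hIcard⟩ := M.augment hSe hB.1 (card_le_card_of_isBasis hB hSe)
  have hIT : I ⊆ insert e B := by
    refine hIsub.trans ?_
    rw [Finset.insert_union, Finset.union_eq_right.2 hSB]
  have hcard : (insert e B \ I).card = 1 := by
    rw [Finset.card_sdiff_of_subset hIT, Finset.card_insert_of_notMem heB, hIcard]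
    omega
  obtain ⟨y, hy⟩ := Finset.card_eq_one.1 hcard
  have hyT : y ∈ insert e B \ I := hy ▸ Finset.mem_singleton_self y
  have hIeq : I = (insert e B).erase y := by
    rw [← Finset.sdiff_singleton_eq_erase, ← hy, Finset.sdiff_sdiff_eq_self hIT]
  have hye : y ≠ e := fun h =>
    (Finset.mem_sdiff.1 hyT).2 (h ▸ hSeI (Finset.mem_insert_self e S))
  refine ⟨y, ?_, fun hyS => (Finset.mem_sdiff.1 hyT).2 (hSeI (Finset.mem_insert_of_mem hyS)),
    fun h => absurd h heB, ?_⟩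
  · exact (Finset.mem_insert.1 (Finset.mem_sdiff.1 hyT).1).resolve_left hye
  · rw [← Finset.erase_insert_of_ne hye.symm, ← hIeq]
    exact isBasis_of_card_le hB hI hIcard.ge

end FinMatroid

section Support

variable {k : ℕ} [Fintype V] [DecidableEq V] {x y : V → Fin (k+1)}

lemma mem_suppF {v : V} : v ∈ suppF x ↔ x v ≠ 0 := by simp [suppF]

lemma suppF_update_of_ne_zero {e : V} {t : Fin (k+1)} (ht : t ≠ 0) :
    suppF (Function.update x e t) = insert e (suppF x) := by
  ext v
  by_cases hv : v = e
  · subst hv; simp [mem_suppF, ht]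
  · simp [mem_suppF, hv]

lemma suppF_update_zero (e : V) : suppF (Function.update x e 0) = (suppF x).erase e := by
  ext v
  by_cases hv : v = e
  · subst hv; simp [mem_suppF]
  · simp [mem_suppF, hv]

lemma suppF_subset_of_preceq (h : preceq x y) : suppF x ⊆ suppF y := fun v hv => by
  rw [mem_suppF] at hv ⊢
  rwa [h v hv]

lemma eq_of_preceq_of_card_suppF_le (h : preceq x y) (hc : (suppF y).card ≤ (suppF x).card) :
    x = y := by
  have hsupp := Finset.eq_of_subset_of_card_le (suppF_subset_of_preceq h) hc
  funext v
  by_cases hv : x v = 0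
  · by_contra hne
    exact (mem_suppF.1 (hsupp ▸ mem_suppF.2 (Ne.symm (hv ▸ hne)))) hv
  · exact (h v hv).symm

end Support

section Preceq

variable {k : ℕ} [DecidableEq V] {x y : V → Fin (k+1)}

lemma preceq.update (h : preceq x y) (e : V) (t : Fin (k+1)) :
    preceq (Function.update x e t) (Function.update y e t) := fun v hv => by
  by_cases hve : v = e
  · subst hve; simp
  · rw [Function.update_of_ne hve] at hv ⊢
    rw [Function.update_of_ne hve, h v hv]

lemma preceq_update_zero (h : preceq x y) {v : V} (hv : x v = 0) :
    preceq x (Function.update y v 0) := fun u hu => by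
  rw [Function.update_of_ne (by rintro rfl; exact hu hv), h u hu]

end Preceq

section Greedy

variable {k : ℕ} [DecidableEq V] {f g : (V → Fin (k+1)) → ℝ} {ε : ℝ}

lemma marg_le_marg_add (hclose : ∀ x, |f x - g x| ≤ ε) (x : V → Fin (k+1)) (e : V)
    (i : Fin (k+1)) : marg f x e i ≤ marg g x e i + 2 * ε := by
  have h1 := abs_le.1 (hclose (Function.update x e i))
  have h2 := abs_le.1 (hclose x)
  unfold marg
  linarith [h1.2, h2.1]

lemma sub_le_marg_of_exchange (hmono : MonotoneK f) (hos : OrthantSubmodular f)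
    {x o : V → Fin (k+1)} {y e : V} {t : Fin (k+1)} (hxo : preceq x o) (hxy : x y = 0)
    (hoy : o y ≠ 0) (he : Function.update o y 0 e = 0) (ht : t ≠ 0) :
    f o - f (Function.update (Function.update o y 0) e t) ≤ marg f x y (o y) := by
  set w := Function.update o y 0
  have hremove : marg f w y (o y) = f o - f w := by simp [w, marg]
  have hsub := hos x w (preceq_update_zero hxo hxy) y (Function.update_self _ _ _) (o y) hoy
  have hadd := hmono w e he t ht
  unfold marg at hadd
  linarith

variable [Fintype V]

def IsGreedyStep (M : FinMatroid V) (g : (V → Fin (k+1)) → ℝ) (x : V → Fin (k+1)) (e : V)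
    (t : Fin (k+1)) : Prop :=
  t ≠ 0 ∧ x e = 0 ∧ M.Indep (insert e (suppF x)) ∧
    ∀ v, x v = 0 → M.Indep (insert v (suppF x)) → ∀ i : Fin (k+1), i ≠ 0 →
      marg g x e t ≥ marg g x v i

lemma exists_isBasis_of_isGreedyStep {M : FinMatroid V} (hmono : MonotoneK f)
    (hos : OrthantSubmodular f) (hclose : ∀ x, |f x - g x| ≤ ε) {x o : V → Fin (k+1)} {e : V}
    {t : Fin (k+1)} (hxo : preceq x o) (ho : M.IsBasis (suppF o)) (hg : IsGreedyStep M g x e t) :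
    ∃ o', preceq (Function.update x e t) o' ∧ M.IsBasis (suppF o') ∧
      f o - f o' ≤ marg g x e t + 2 * ε := by
  obtain ⟨ht, hxe, hindep, hbest⟩ := hg
  have hSo := suppF_subset_of_preceq hxo
  obtain ⟨y, hyo, hyx, hye, hbasis⟩ :=
    FinMatroid.exists_isBasis_insert_erase ho hSo (by simpa [mem_suppF] using hxe) hindep
  have hwe : Function.update o y 0 e = 0 := by
    by_contra hne
    have he : e ∈ (suppF o).erase y := by rwa [← suppF_update_zero, mem_suppF]
    exact (Finset.mem_erase.1 he).1 (hye (Finset.mem_erase.1 he).2).symm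
  have hxy : x y = 0 := by simpa [mem_suppF] using hyx
  have hyindep : M.Indep (insert y (suppF x)) :=
    M.indep_subset (Finset.insert_subset hyo hSo) ho.1
  refine ⟨Function.update (Function.update o y 0) e t, (preceq_update_zero hxo hxy).update e t,
    by rwa [suppF_update_of_ne_zero ht, suppF_update_zero], ?_⟩
  calc f o - f (Function.update (Function.update o y 0) e t)
      ≤ marg f x y (o y) := sub_le_marg_of_exchange hmono hos hxo hxy (mem_suppF.1 hyo) hwe ht
    _ ≤ marg g x y (o y) + 2 * ε := marg_le_marg_add hclose x y (o y)
    _ ≤ marg g x e t + 2 * ε := by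
      gcongr
      exact hbest y hxy hyindep (o y) (mem_suppF.1 hyo)

lemma exists_isBasis_of_greedy {M : FinMatroid V} (hmono : MonotoneK f)
    (hos : OrthantSubmodular f) (hclose : ∀ x, |f x - g x| ≤ ε) (s : ℕ → V → Fin (k+1))
    (e : ℕ → V) (t : ℕ → Fin (k+1)) (o : V → Fin (k+1)) (ho : M.IsBasis (suppF o))
    (hs0 : preceq (s 0) o) (n : ℕ)
    (hstep : ∀ j < n, s (j+1) = Function.update (s j) (e j) (t j) ∧
      IsGreedyStep M g (s j) (e j) (t j)) :
    ∃ o', preceq (s n) o' ∧ M.IsBasis (suppF o') ∧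
      (suppF (s n)).card = (suppF (s 0)).card + n ∧
      f o - f o' ≤ g (s n) - g (s 0) + 2 * n * ε := by
  induction n with
  | zero => exact ⟨o, hs0, ho, rfl, by simp⟩
  | succ n ih =>
    obtain ⟨o', hso', ho', hcard, hloss⟩ := ih fun j hj => hstep j (by omega)
    obtain ⟨hsn, hg⟩ := hstep n (by omega)
    obtain ⟨o'', hso'', ho'', hloss'⟩ :=
      exists_isBasis_of_isGreedyStep hmono hos hclose hso' ho' hg
    refine ⟨o'', hsn ▸ hso'', ho'', ?_, ?_⟩
    · have hen : e n ∉ suppF (s n) := by simpa [mem_suppF] using hg.2.1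
      rw [hsn, suppF_update_of_ne_zero hg.1, Finset.card_insert_of_notMem hen, hcard, add_assoc]
    · rw [marg, ← hsn] at hloss'
      push_cast
      linarith

end Greedy

theorem stmt10_general {k : ℕ} [Fintype V] [DecidableEq V]
    (M : FinMatroid V) (r : ℕ)
    (hrank : ∀ B : Finset V, M.IsBasis B → B.card = r)
    (f fh : (V → Fin (k+1)) → ℝ)
    (hmono : MonotoneK f) (hos : OrthantSubmodular f)
    (hf0 : 0 ≤ f (fun _ => 0))
    (ε : ℝ)
    (hclose : ∀ x, |f x - fh x| ≤ ε)
    -- the greedy sequence `s^{(0)}, …, s^{(r)}`, choosing pair `(e j, t j)` at step `j`: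
    (s : ℕ → V → Fin (k+1)) (e : ℕ → V) (t : ℕ → Fin (k+1))
    (hs0 : s 0 = fun _ => 0)
    (hstep : ∀ j ∈ Finset.Icc 1 r,
      s j = Function.update (s (j-1)) (e j) (t j) ∧
      t j ≠ 0 ∧
      s (j-1) (e j) = 0 ∧
      M.Indep (insert (e j) (suppF (s (j-1)))) ∧
      (∀ v, s (j-1) v = 0 → M.Indep (insert v (suppF (s (j-1)))) →
        ∀ i : Fin (k+1), i ≠ 0 →
        marg fh (s (j-1)) (e j) (t j) ≥ marg fh (s (j-1)) v i))
    (o : V → Fin (k+1)) (ho : M.IsBasis (suppF o)) :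
    f (s r) ≥ (1/2) * f o - ((r : ℝ) + 1) * ε := by
  have hstep' : ∀ j < r, s (j+1) = Function.update (s j) (e (j+1)) (t (j+1)) ∧
      IsGreedyStep M fh (s j) (e (j+1)) (t (j+1)) := fun j hj => by
    have h := hstep (j+1) (Finset.mem_Icc.2 ⟨by omega, hj⟩)
    rw [Nat.add_sub_cancel] at h
    exact h
  have hsupp0 : suppF (s 0) = ∅ := by simp [hs0, suppF]
  obtain ⟨o', hso', ho', hcard, hloss⟩ := exists_isBasis_of_greedy hmono hos hclose s
    (fun j => e (j+1)) (fun j => t (j+1)) o ho (fun v hv => by simp [hs0] at hv) r hstep'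
  have hsr : s r = o' :=
    eq_of_preceq_of_card_suppF_le hso' (by rw [hcard, hsupp0, hrank _ ho']; simp)
  have hclose_r := abs_le.1 (hclose (s r))
  have hclose_0 := abs_le.1 (hclose (s 0))
  rw [← hsr, hs0] at hloss
  rw [hs0] at hclose_0
  linarith

/-- Robustness of the greedy algorithm for monotone `k`-submodular maximization
under a matroid constraint, run with a perturbed oracle `f̂`:
`f(s) ≥ (1/2)·f(o) − (r+1)·ε`. -/
theorem stmt10 {k : ℕ} (hk : 1 ≤ k) [Fintype V] [DecidableEq V]
    (M : FinMatroid V) (r : ℕ) (hr1 : 1 ≤ r)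
    (hrank : ∀ B : Finset V, M.IsBasis B → B.card = r)
    (f fh : (V → Fin (k+1)) → ℝ)
    (hmono : MonotoneK f) (hos : OrthantSubmodular f)
    (hf0 : 0 ≤ f (fun _ => 0))
    (ε : ℝ) (hε : 0 ≤ ε)
    (hclose : ∀ x, |f x - fh x| ≤ ε)
    -- the greedy sequence `s^{(0)}, …, s^{(r)}`, choosing pair `(e j, t j)` at step `j`:
    (s : ℕ → V → Fin (k+1)) (e : ℕ → V) (t : ℕ → Fin (k+1))
    (hs0 : s 0 = fun _ => 0)
    (hstep : ∀ j ∈ Finset.Icc 1 r,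
      s j = Function.update (s (j-1)) (e j) (t j) ∧
      t j ≠ 0 ∧
      s (j-1) (e j) = 0 ∧
      M.Indep (insert (e j) (suppF (s (j-1)))) ∧
      (∀ v, s (j-1) v = 0 → M.Indep (insert v (suppF (s (j-1)))) →
        ∀ i : Fin (k+1), i ≠ 0 →
        marg fh (s (j-1)) (e j) (t j) ≥ marg fh (s (j-1)) v i))
    (o : V → Fin (k+1)) (ho : M.IsBasis (suppF o)) :
    f (s r) ≥ (1/2) * f o - ((r : ℝ) + 1) * ε :=
  stmt10_general M r hrank f fh hmono hos hf0 ε hclose s e t hs0 hstep o ho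

end Stmt10
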